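/- arXiv:1203.1140 — 2 statements merged into one kernel-verified Lean document; each statement's English description precedes it below -/
import Mathlib

section
/- Let ζ, ζ' be general (ρ_1,ρ_2)-admissible point sets in R^d with ζ ∩ Q_R = ζ' ∩ Q_R, where Q_R = (−R,R)^d. Then every Delaunay simplex of ζ that intersects Q_{R−2ρ_2} is also a Delaunay simplex of ζ'; i.e., the Delaunay tessellations of ζ and ζ' coincide on Q_{R−2ρ_2}. -/
open Metric Set

/-- Hard-core condition with parameter `ρ₁`. -/
def HardCore {d : ℕ} (ρ₁ : ℝ) (ζ : Set (EuclideanSpace ℝ (Fin d))) : Prop :=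
  ∀ x ∈ ζ, ∀ y ∈ ζ, x ≠ y → ρ₁ ≤ dist x y

/-- Empty-space condition with parameter `ρ₂`. -/
def EmptySpace {d : ℕ} (ρ₂ : ℝ) (ζ : Set (EuclideanSpace ℝ (Fin d))) : Prop :=
  ∀ z : EuclideanSpace ℝ (Fin d), ∃ y ∈ ζ, dist z y < ρ₂

/-- `ζ` is general: no `d+1` points in a hyperplane, no `d+2` on a hypersphere. -/
def IsGeneral {d : ℕ} (ζ : Set (EuclideanSpace ℝ (Fin d))) : Prop :=
  (∀ s : Finset (EuclideanSpace ℝ (Fin d)), ↑s ⊆ ζ → s.card = d + 1 →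
    ¬ ∃ (f : EuclideanSpace ℝ (Fin d) →ₗ[ℝ] ℝ) (a : ℝ), f ≠ 0 ∧ ∀ x ∈ s, f x = a) ∧
  (∀ s : Finset (EuclideanSpace ℝ (Fin d)), ↑s ⊆ ζ → s.card = d + 2 →
    ¬ ∃ (c : EuclideanSpace ℝ (Fin d)) (r : ℝ), ∀ x ∈ s, dist x c = r)

/-- `(v, c, r)` is a Delaunay simplex of `ζ` with circumcentre `c` and circumradius `r`. -/
def IsDelaunaySimplex {d : ℕ} (ζ : Set (EuclideanSpace ℝ (Fin d)))
    (v : Fin (d + 1) → EuclideanSpace ℝ (Fin d))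
    (c : EuclideanSpace ℝ (Fin d)) (r : ℝ) : Prop :=
  Function.Injective v ∧ (∀ i, v i ∈ ζ) ∧ (∀ i, dist (v i) c = r) ∧
  ∀ z ∈ ζ, r ≤ dist z c

/-- The open cube `Q_R = (-R, R)^d`. -/
def cubeQ (d : ℕ) (R : ℝ) : Set (EuclideanSpace ℝ (Fin d)) := {x | ∀ i, |x i| < R}

/-!
The closed circumball of a Delaunay simplex contains the simplex, has radius `r < ρ₂` by the
empty-space condition (some point of `ζ` lies within `ρ₂` of the circumcentre, and none lies
inside the circumsphere), and therefore stays within `2r < 2ρ₂` of any point of the simplex.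
If the simplex meets `Q_{R-2ρ₂}`, the whole circumball lies in `Q_R`, where `ζ` and `ζ'` agree;
being Delaunay only depends on the points in the closed circumball.
-/

lemma ball_subset_cubeQ {d : ℕ} {R δ : ℝ} {p : EuclideanSpace ℝ (Fin d)}
    (hp : p ∈ cubeQ d (R - δ)) : ball p δ ⊆ cubeQ d R := by
  intro x hx j
  have hxj : dist (x j) (p j) < δ := (PiLp.dist_apply_le x p j).trans_lt hx
  calc |x j| ≤ |x j - p j| + |p j| := sub_le_iff_le_add.1 (abs_sub_abs_le_abs_sub _ _)
    _ < δ + (R - δ) := add_lt_add hxj (hp j)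
    _ = R := by ring

namespace IsDelaunaySimplex

variable {d : ℕ} {ζ ζ' : Set (EuclideanSpace ℝ (Fin d))}
  {v : Fin (d + 1) → EuclideanSpace ℝ (Fin d)} {c : EuclideanSpace ℝ (Fin d)} {r : ℝ}

lemma radius_lt {ρ₂ : ℝ} (hD : IsDelaunaySimplex ζ v c r) (hes : EmptySpace ρ₂ ζ) :
    r < ρ₂ := by
  obtain ⟨y, hyζ, hyc⟩ := hes c
  exact (hD.2.2.2 y hyζ).trans_lt (by rwa [dist_comm])

lemma convexHull_subset_closedBall (hD : IsDelaunaySimplex ζ v c r) :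
    convexHull ℝ (range v) ⊆ closedBall c r :=
  convexHull_min (range_subset_iff.2 fun i => (hD.2.2.1 i).le) (convex_closedBall c r)

lemma of_inter_eq {U : Set (EuclideanSpace ℝ (Fin d))} (hD : IsDelaunaySimplex ζ v c r)
    (hU : closedBall c r ⊆ U) (hagree : ζ ∩ U = ζ' ∩ U) : IsDelaunaySimplex ζ' v c r := by
  obtain ⟨hinj, hmem, hdist, hempty⟩ := hD
  refine ⟨hinj, fun i => ?_, hdist, fun z hz => ?_⟩
  · have hvU : v i ∈ U := hU (hdist i).le
    exact (hagree ▸ ⟨hmem i, hvU⟩ : v i ∈ ζ' ∩ U).1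
  · by_contra! hzc
    have hzU : z ∈ U := hU hzc.le
    exact (hempty z (hagree ▸ ⟨hz, hzU⟩ : z ∈ ζ ∩ U).1).not_gt hzc

end IsDelaunaySimplex

theorem delaunay_local_coincidence_general (d : ℕ) (ρ₂ R : ℝ)
    (ζ ζ' : Set (EuclideanSpace ℝ (Fin d)))
    (hes : EmptySpace ρ₂ ζ)
    (hagree : ζ ∩ cubeQ d R = ζ' ∩ cubeQ d R) :
    ∀ (v : Fin (d + 1) → EuclideanSpace ℝ (Fin d))
      (c : EuclideanSpace ℝ (Fin d)) (r : ℝ),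
      IsDelaunaySimplex ζ v c r →
      ((convexHull ℝ (Set.range v)) ∩ cubeQ d (R - 2 * ρ₂)).Nonempty →
      IsDelaunaySimplex ζ' v c r := by
  rintro v c r hD ⟨p, hp_hull, hp_cube⟩
  have hpc : dist p c ≤ r := hD.convexHull_subset_closedBall hp_hull
  have hrρ : r < ρ₂ := hD.radius_lt hes
  have hball : closedBall c r ⊆ ball p (2 * ρ₂) := fun x hx =>
    calc dist x p ≤ dist x c + dist p c := dist_triangle_right x p c
      _ ≤ r + r := add_le_add hx hpc
      _ < 2 * ρ₂ := by linarith
  exact hD.of_inter_eq (hball.trans (ball_subset_cubeQ hp_cube)) hagree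

/-- If two general `(ρ₁,ρ₂)`-admissible point sets agree on `Q_R`, then every Delaunay
simplex of the first one intersecting `Q_{R-2ρ₂}` is also a Delaunay simplex of the second:
the Delaunay tessellations coincide on `Q_{R-2ρ₂}`. -/
theorem delaunay_local_coincidence (d : ℕ) (ρ₁ ρ₂ R : ℝ) (h₁ : 0 < ρ₁) (h₁₂ : ρ₁ < ρ₂)
    (ζ ζ' : Set (EuclideanSpace ℝ (Fin d)))
    (hhc : HardCore ρ₁ ζ) (hes : EmptySpace ρ₂ ζ) (hgen : IsGeneral ζ)
    (hhc' : HardCore ρ₁ ζ') (hes' : EmptySpace ρ₂ ζ') (hgen' : IsGeneral ζ')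
    (hagree : ζ ∩ cubeQ d R = ζ' ∩ cubeQ d R) :
    ∀ (v : Fin (d + 1) → EuclideanSpace ℝ (Fin d))
      (c : EuclideanSpace ℝ (Fin d)) (r : ℝ),
      IsDelaunaySimplex ζ v c r →
      ((convexHull ℝ (Set.range v)) ∩ cubeQ d (R - 2 * ρ₂)).Nonempty →
      IsDelaunaySimplex ζ' v c r :=
  delaunay_local_coincidence_general d ρ₂ R ζ ζ' hes hagree
end

section
/- Let S : O(R^d) × A → R be localized (S(D,ζ) depends only on ζ ∩ D) and smooth of order p ∈ [1,d): |S(D, ζ_1 ∪ ζ_2) − S(D, ζ_1)| ≤ C diam(D)^p (card(ζ_2 ∩ D))^{(d−p)/d} for rectilinear cubes D. Let ζ satisfy the hard-core condition with parameter ρ_1 > 0. Then for any rectilinear cube Q̂ and any z ∈ R^d, (1/R^d)|S(Q̂_R, ζ) − S(Q̂_R ∩ (Q̂_R + z), ζ)| → 0 as R → ∞, where Q̂_R = {Rx : x ∈ Q̂}. -/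
open Metric Set Filter Topology

/-- The closed rectilinear cube with lower-left corner `c` and side `r`. -/
def rectCube {d : ℕ} (c : EuclideanSpace ℝ (Fin d)) (r : ℝ) :
    Set (EuclideanSpace ℝ (Fin d)) :=
  {x | ∀ i, x i ∈ Set.Icc (c i) (c i + r)}

/-!
A point of `Q̂_R` that is not in `Q̂_R + z` lies within `‖z‖` of one of the `2d` faces of `Q̂_R`,
i.e. in one of `2d` slabs of thickness `‖z‖` and cross-section `(R r)^{d-1}`. Cutting a box into
cells of side `s` with `√d s < ρ₁`, a hard-core set has at most one point per cell, so these slabs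
carry `O(R^{d-1})` points of `ζ`. By localization `S(Q̂_R ∩ (Q̂_R + z), ζ) = S(Q̂_R, ζ ∩ (Q̂_R + z))`,
and smoothness applied to `ζ = (ζ ∩ (Q̂_R + z)) ∪ (ζ \ (Q̂_R + z))` bounds the error by
`C (√d r R)^p (K R^{d-1})^{(d-p)/d} = O(R^{d - (d-p)/d})`, which is `o(R^d)`.
-/

open Function

theorem EuclideanSpace.dist_le_sqrt_card_mul {ι : Type*} [Fintype ι]
    {x y : EuclideanSpace ℝ ι} {s : ℝ} (hs : 0 ≤ s) (h : ∀ i, dist (x i) (y i) ≤ s) :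
    dist x y ≤ √(Fintype.card ι) * s := by
  rw [EuclideanSpace.dist_eq, ← Real.sqrt_sq hs, ← Real.sqrt_mul (Nat.cast_nonneg _)]
  gcongr
  calc ∑ i, dist (x i) (y i) ^ 2 ≤ ∑ _i : ι, s ^ 2 := by gcongr with i; exact h i
    _ = Fintype.card ι * s ^ 2 := by simp

theorem HardCore.mono {d : ℕ} {ρ : ℝ} {ζ ζ' : Set (EuclideanSpace ℝ (Fin d))}
    (hζ : HardCore ρ ζ) (h : ζ' ⊆ ζ) : HardCore ρ ζ' :=
  fun x hx y hy hxy => hζ x (h hx) y (h hy) hxy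

def box {d : ℕ} (a L : Fin d → ℝ) : Set (EuclideanSpace ℝ (Fin d)) :=
  {x | ∀ i, x i ∈ Icc (a i) (a i + L i)}

theorem Nat.abs_sub_lt_one_of_floor_eq_floor {R : Type*} [CommRing R] [LinearOrder R]
    [IsStrictOrderedRing R] [FloorSemiring R] {u v : R} (hu : 0 ≤ u) (hv : 0 ≤ v)
    (h : ⌊u⌋₊ = ⌊v⌋₊) : |u - v| < 1 := by
  have := Nat.lt_floor_add_one u
  have := Nat.lt_floor_add_one v
  have := Nat.floor_le hu
  have := Nat.floor_le hv
  rw [abs_sub_lt_iff]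
  constructor <;> push_cast [h] at * <;> linarith

theorem HardCore.encard_inter_box_le {d : ℕ} {ρ s : ℝ} {ζ : Set (EuclideanSpace ℝ (Fin d))}
    (hζ : HardCore ρ ζ) (hs : 0 < s) (hsρ : √d * s < ρ) (a L : Fin d → ℝ) :
    (ζ ∩ box a L).encard ≤ ∏ i, (⌊L i / s⌋₊ + 1) := by
  -- a cell of side `s` has diameter at most `√d s < ρ`, so it holds at most one point of `ζ`
  set cell : EuclideanSpace ℝ (Fin d) → Fin d → ℕ := fun x i => ⌊(x i - a i) / s⌋₊
  have hcell_nonneg : ∀ x ∈ ζ ∩ box a L, ∀ i, 0 ≤ (x i - a i) / s := fun x hx i =>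
    div_nonneg (sub_nonneg.2 (hx.2 i).1) hs.le
  have hmaps : MapsTo cell (ζ ∩ box a L)
      (Fintype.piFinset fun i => Finset.range (⌊L i / s⌋₊ + 1) : Set (Fin d → ℕ)) := by
    intro x hx
    simp only [Finset.mem_coe, Fintype.mem_piFinset, Finset.mem_range, Nat.lt_succ_iff]
    intro i
    exact Nat.floor_le_floor (by gcongr; linarith [(hx.2 i).2])
  have hinj : InjOn cell (ζ ∩ box a L) := by
    intro x hx y hy hxy
    by_contra hne
    have hclose : dist x y ≤ √(Fintype.card (Fin d)) * s :=
      EuclideanSpace.dist_le_sqrt_card_mul hs.le fun i => by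
        have := Nat.abs_sub_lt_one_of_floor_eq_floor (hcell_nonneg x hx i) (hcell_nonneg y hy i)
          (congrFun hxy i)
        rw [← sub_div, sub_sub_sub_cancel_right, abs_div, abs_of_pos hs, div_lt_one hs] at this
        exact (Real.dist_eq _ _).trans_le this.le
    rw [Fintype.card_fin] at hclose
    exact (hζ x hx.1 y hy.1 hne).not_gt (hclose.trans_lt hsρ)
  calc (ζ ∩ box a L).encard
      ≤ (Fintype.piFinset fun i => Finset.range (⌊L i / s⌋₊ + 1) : Set (Fin d → ℕ)).encard :=
        encard_le_encard_of_injOn hmaps hinj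
    _ = ∏ i, (⌊L i / s⌋₊ + 1) := by
        rw [Set.encard_coe_eq_coe_finsetCard, Fintype.card_piFinset]
        simp

theorem box_diff_image_add_subset {d : ℕ} (a L : Fin d → ℝ) (z : EuclideanSpace ℝ (Fin d))
    {w : ℝ} (hz : ∀ i, |z i| ≤ w) :
    box a L \ (· + z) '' box a L ⊆
      ⋃ i, (box a (update L i w) ∪ box (update a i (a i + L i - w)) (update L i w)) := by
  rintro x ⟨hx, hxz⟩
  have hxz' : x - z ∉ box a L := fun h => hxz ⟨x - z, h, sub_add_cancel x z⟩
  simp only [box, mem_ofPred_eq, not_forall, mem_Icc, not_and_or, not_le, PiLp.sub_apply] at hxz'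
  obtain ⟨i, hi⟩ := hxz'
  have hzi := abs_le.1 (hz i)
  refine mem_iUnion.2 ⟨i, ?_⟩
  rcases hi with hi | hi
  · refine Or.inl fun j => ?_
    rcases eq_or_ne j i with rfl | hj
    · simp only [update_self, mem_Icc]
      constructor <;> linarith [(hx j).1]
    · simpa [hj] using hx j
  · refine Or.inr fun j => ?_
    rcases eq_or_ne j i with rfl | hj
    · simp only [update_self, mem_Icc]
      constructor <;> linarith [(hx j).2]
    · simpa [hj] using hx j

theorem Fintype.prod_update_const {ι M : Type*} [Fintype ι] [DecidableEq ι] [CommMonoid M]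
    (i : ι) (b c : M) :
    ∏ j, update (fun _ => c) i b j = b * c ^ (Fintype.card ι - 1) := by
  rw [Finset.prod_update_of_mem (Finset.mem_univ i), Finset.prod_const,
    Finset.card_sdiff_of_subset (by simp), Finset.card_singleton, Finset.card_univ]

theorem HardCore.ncard_inter_rectCube_diff_image_add_le {d : ℕ} {ρ s : ℝ}
    {ζ : Set (EuclideanSpace ℝ (Fin d))} (hζ : HardCore ρ ζ) (hs : 0 < s) (hsρ : √d * s < ρ)
    (c z : EuclideanSpace ℝ (Fin d)) (ℓ : ℝ) :
    (ζ ∩ (rectCube c ℓ \ (· + z) '' rectCube c ℓ)).ncard ≤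
      d * (2 * ((⌊‖z‖ / s⌋₊ + 1) * (⌊ℓ / s⌋₊ + 1) ^ (d - 1))) := by
  set N := (⌊‖z‖ / s⌋₊ + 1) * (⌊ℓ / s⌋₊ + 1) ^ (d - 1)
  have hslab : ∀ i a, (ζ ∩ box a (update (fun _ => ℓ) i ‖z‖)).encard ≤ N := fun i a => by
    refine (hζ.encard_inter_box_le hs hsρ a _).trans_eq ?_
    have hfactors : (fun j => ⌊update (fun _ => ℓ) i ‖z‖ j / s⌋₊ + 1) =
        update (fun _ => ⌊ℓ / s⌋₊ + 1) i (⌊‖z‖ / s⌋₊ + 1) := by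
      ext j
      rcases eq_or_ne j i with rfl | hj <;> simp [*]
    rw [hfactors, Fintype.prod_update_const, Fintype.card_fin]
  have hcover := box_diff_image_add_subset c (fun _ => ℓ) z fun i => by
    simpa using PiLp.norm_apply_le z i
  refine (Set.encard_le_coe_iff_finite_ncard_le.1 ?_).2
  calc (ζ ∩ (rectCube c ℓ \ (· + z) '' rectCube c ℓ)).encard
      ≤ (⋃ i, (ζ ∩ box c (update (fun _ => ℓ) i ‖z‖) ∪
          ζ ∩ box (update c i (c i + ℓ - ‖z‖)) (update (fun _ => ℓ) i ‖z‖))).encard := by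
        refine encard_le_encard fun x hx => ?_
        obtain ⟨i, hi⟩ := mem_iUnion.1 (hcover hx.2)
        exact mem_iUnion.2 ⟨i, hi.imp (⟨hx.1, ·⟩) (⟨hx.1, ·⟩)⟩
    _ ≤ ∑ i, (N + N : ℕ∞) := by
        refine (encard_iUnion_le_of_fintype _).trans (Finset.sum_le_sum fun i _ => ?_)
        exact (encard_union_le _ _).trans (add_le_add (hslab i _) (hslab i _))
    _ = (d * (2 * N) : ℕ) := by simp; ring

theorem HardCore.exists_ncard_boundary_layer_le {d : ℕ} {ρ : ℝ} (hρ : 0 < ρ)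
    {ζ : Set (EuclideanSpace ℝ (Fin d))} (hζ : HardCore ρ ζ) (c z : EuclideanSpace ℝ (Fin d))
    {r : ℝ} (hr : 0 ≤ r) :
    ∃ K : ℝ, ∀ R ≥ 1, ((ζ ∩ (rectCube (R • c) (R * r) \
      (· + z) '' rectCube (R • c) (R * r))).ncard : ℝ) ≤ K * R ^ (d - 1) := by
  set s := ρ / (√d + 1)
  have hs : 0 < s := by positivity
  have hsρ : √d * s < ρ := by
    rw [← mul_div_assoc, div_lt_iff₀ (by positivity)]
    linarith
  refine ⟨d * (2 * ((‖z‖ / s + 1) * (r / s + 1) ^ (d - 1))), fun R hR => ?_⟩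
  calc _ ≤ ((d * (2 * ((⌊‖z‖ / s⌋₊ + 1) * (⌊R * r / s⌋₊ + 1) ^ (d - 1))) : ℕ) : ℝ) := by
        exact_mod_cast hζ.ncard_inter_rectCube_diff_image_add_le hs hsρ (R • c) z (R * r)
    _ ≤ d * (2 * ((‖z‖ / s + 1) * (R * r / s + 1) ^ (d - 1))) := by
        push_cast
        gcongr <;> exact Nat.floor_le (by positivity)
    _ ≤ d * (2 * ((‖z‖ / s + 1) * (R * (r / s + 1)) ^ (d - 1))) := by
        gcongr
        rw [mul_add, mul_one, mul_div_assoc]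
        linarith
    _ = _ := by rw [mul_pow]; ring

theorem diam_rectCube_le {d : ℕ} (c : EuclideanSpace ℝ (Fin d)) {r : ℝ} (hr : 0 ≤ r) :
    diam (rectCube c r) ≤ √d * r :=
  diam_le_of_forall_dist_le (by positivity) fun x hx y hy => by
    have := EuclideanSpace.dist_le_sqrt_card_mul (x := x) (y := y) hr fun i => by
      rw [Real.dist_eq, abs_le]
      constructor <;> linarith [(hx i).1, (hx i).2, (hy i).1, (hy i).2]
    rwa [Fintype.card_fin] at this

theorem tendsto_rpow_mul_rpow_div_pow_atTop {d : ℕ} {p : ℝ} (hd : 0 < d) (hpd : p < d)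
    {a b : ℝ} (ha : 0 ≤ a) (hb : 0 ≤ b) :
    Tendsto (fun R : ℝ => (a * R) ^ p * (b * R ^ (d - 1)) ^ (((d : ℝ) - p) / d) / R ^ d)
      atTop (𝓝 0) := by
  set α := ((d : ℝ) - p) / d
  have hα : 0 < α := div_pos (by linarith) (by exact_mod_cast hd)
  have hexp : p + ((d : ℝ) - 1) * α - d = -α := by
    simp only [α]
    field_simp
    ring
  have hlim := (tendsto_rpow_neg_atTop hα).const_mul (a ^ p * b ^ α)
  rw [mul_zero] at hlim
  refine hlim.congr' ?_
  filter_upwards [eventually_gt_atTop 0] with R hR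
  rw [← hexp, Real.rpow_sub hR, Real.rpow_add hR, Real.rpow_natCast, Real.mul_rpow ha hR.le,
    Real.mul_rpow hb (by positivity), ← Real.rpow_natCast R (d - 1), ← Real.rpow_mul hR.le,
    Nat.cast_sub hd, Nat.cast_one]
  ring

theorem abs_sub_inter_le_of_localized {E : Type*} {S : Set E → Set E → ℝ}
    (hloc : ∀ D D' ζ ζ' : Set E, ζ ∩ D = ζ' ∩ D' → S D ζ = S D' ζ') {P : Set E → Prop}
    {D T ζ : Set E} {f : ℕ → ℝ}
    (hsmooth : ∀ ζ₁ ζ₂, P ζ₁ → P ζ₂ → |S D (ζ₁ ∪ ζ₂) - S D ζ₁| ≤ f (ζ₂ ∩ D).ncard)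
    (hP : ∀ ζ' ⊆ ζ, P ζ') :
    |S D ζ - S (D ∩ T) ζ| ≤ f (ζ ∩ (D \ T)).ncard := by
  have hlocT : S (D ∩ T) ζ = S D (ζ ∩ T) :=
    hloc _ _ _ _ (by ext; simp only [mem_inter_iff]; tauto)
  have hlayer : ζ \ T ∩ D = ζ ∩ (D \ T) := by
    ext
    simp only [mem_inter_iff, Set.mem_sdiff]
    tauto
  have h := hsmooth (ζ ∩ T) (ζ \ T) (hP _ inter_subset_left) (hP _ sdiff_subset)
  rwa [inter_union_sdiff, hlayer, ← hlocT] at h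

theorem localized_smooth_shift_error_general (d : ℕ) (p : ℝ) (hp : 1 ≤ p)
    (hpd : p < d) (C ρ₁ : ℝ) (hC : 0 < C) (hρ₁ : 0 < ρ₁)
    (S : Set (EuclideanSpace ℝ (Fin d)) → Set (EuclideanSpace ℝ (Fin d)) → ℝ)
    (hloc : ∀ (D D' ζ ζ' : Set (EuclideanSpace ℝ (Fin d))),
      ζ ∩ D = ζ' ∩ D' → S D ζ = S D' ζ')
    (hsmooth : ∀ (c : EuclideanSpace ℝ (Fin d)) (r : ℝ), 0 < r →
      ∀ ζ₁ ζ₂ : Set (EuclideanSpace ℝ (Fin d)), HardCore ρ₁ ζ₁ → HardCore ρ₁ ζ₂ →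
      |S (rectCube c r) (ζ₁ ∪ ζ₂) - S (rectCube c r) ζ₁| ≤
        C * Metric.diam (rectCube c r) ^ p *
          (((ζ₂ ∩ rectCube c r).ncard : ℝ)) ^ (((d : ℝ) - p) / d))
    (ζ : Set (EuclideanSpace ℝ (Fin d))) (hζ : HardCore ρ₁ ζ)
    (c : EuclideanSpace ℝ (Fin d)) (r : ℝ) (hr : 0 < r)
    (z : EuclideanSpace ℝ (Fin d)) :
    Tendsto (fun R : ℝ => (1 / R ^ d) *
        |S (rectCube (R • c) (R * r)) ζ -
          S (rectCube (R • c) (R * r) ∩ ((fun x => x + z) '' rectCube (R • c) (R * r))) ζ|)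
      atTop (nhds 0) := by
  have hd : 0 < d := by exact_mod_cast (by linarith : (0 : ℝ) < d)
  obtain ⟨K, hK⟩ := hζ.exists_ncard_boundary_layer_le hρ₁ c z hr.le
  have hK0 : 0 ≤ K := by simpa using (Nat.cast_nonneg _).trans (hK 1 le_rfl)
  have hlim := (tendsto_rpow_mul_rpow_div_pow_atTop hd hpd
    (by positivity : 0 ≤ √d * r) hK0).const_mul C
  rw [mul_zero] at hlim
  refine squeeze_zero' ?_ ?_ hlim
  · filter_upwards [eventually_gt_atTop 0] with R hR
    positivity
  filter_upwards [eventually_ge_atTop 1] with R hR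
  set Q := rectCube (R • c) (R * r)
  set T := (· + z) '' Q
  have herror := abs_sub_inter_le_of_localized hloc (D := Q) (T := T)
    (f := fun n => C * diam Q ^ p * (n : ℝ) ^ (((d : ℝ) - p) / d))
    (hsmooth (R • c) (R * r) (by positivity)) fun _ h => hζ.mono h
  calc 1 / R ^ d * |S Q ζ - S (Q ∩ T) ζ|
      ≤ 1 / R ^ d * (C * diam Q ^ p * ((ζ ∩ (Q \ T)).ncard : ℝ) ^ (((d : ℝ) - p) / d)) := by
        gcongr
    _ ≤ 1 / R ^ d * (C * (√d * r * R) ^ p * (K * R ^ (d - 1)) ^ (((d : ℝ) - p) / d)) := by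
        gcongr
        · exact (diam_rectCube_le _ (by positivity)).trans_eq (by ring)
        · exact hK R hR
    _ = _ := by ring

/-- If `S` is localized (its value depends only on the trace of the point set on the domain)
and smooth of order `p ∈ [1, d)` on rectilinear cubes, and `ζ` is hard-core, then for any
rectilinear cube `Q̂` and any shift `z`,
`R^{-d} |S(Q̂_R, ζ) − S(Q̂_R ∩ (Q̂_R + z), ζ)| → 0` as `R → ∞`. -/
theorem localized_smooth_shift_error (d : ℕ) (hd : 0 < d) (p : ℝ) (hp : 1 ≤ p)
    (hpd : p < d) (C ρ₁ : ℝ) (hC : 0 < C) (hρ₁ : 0 < ρ₁)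
    (S : Set (EuclideanSpace ℝ (Fin d)) → Set (EuclideanSpace ℝ (Fin d)) → ℝ)
    (hloc : ∀ (D D' ζ ζ' : Set (EuclideanSpace ℝ (Fin d))),
      ζ ∩ D = ζ' ∩ D' → S D ζ = S D' ζ')
    (hsmooth : ∀ (c : EuclideanSpace ℝ (Fin d)) (r : ℝ), 0 < r →
      ∀ ζ₁ ζ₂ : Set (EuclideanSpace ℝ (Fin d)), HardCore ρ₁ ζ₁ → HardCore ρ₁ ζ₂ →
      |S (rectCube c r) (ζ₁ ∪ ζ₂) - S (rectCube c r) ζ₁| ≤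
        C * Metric.diam (rectCube c r) ^ p *
          (((ζ₂ ∩ rectCube c r).ncard : ℝ)) ^ (((d : ℝ) - p) / d))
    (ζ : Set (EuclideanSpace ℝ (Fin d))) (hζ : HardCore ρ₁ ζ)
    (c : EuclideanSpace ℝ (Fin d)) (r : ℝ) (hr : 0 < r)
    (z : EuclideanSpace ℝ (Fin d)) :
    Tendsto (fun R : ℝ => (1 / R ^ d) *
        |S (rectCube (R • c) (R * r)) ζ -
          S (rectCube (R • c) (R * r) ∩ ((fun x => x + z) '' rectCube (R • c) (R * r))) ζ|)
      atTop (nhds 0) :=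
  localized_smooth_shift_error_general d p hp hpd C ρ₁ hC hρ₁ S hloc hsmooth ζ hζ c r hr z
end
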